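/- Let F be a field of characteristic ≠ 2 and let a, b ∈ M₂(F) be traceless matrices. Then the triple of matrices a, b, a×b is linearly dependent over F if and only if det(a)·det(b) = (a·b)², and this holds if and only if det(a×b) = 0 (i.e. a×b is isotropic or zero). -/
import Mathlib


open Matrix

/-- The inner product of traceless 2×2 matrices: `a·b = -(1/2) tr(ab)`. -/
noncomputable def matInner {F : Type*} [Field F] (a b : Matrix (Fin 2) (Fin 2) F) : F :=
  -((2 : F)⁻¹ * (a * b).trace)

/-- The cross product of traceless 2×2 matrices: `a×b = (ab - ba)/2`. -/
noncomputable def matCross {F : Type*} [Field F] (a b : Matrix (Fin 2) (Fin 2) F) :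
    Matrix (Fin 2) (Fin 2) F :=
  (2 : F)⁻¹ • (a * b - b * a)

/-- for traceless `a, b`, the triple `a, b, a×b` is linearly
dependent iff `det(a)·det(b) = (a·b)²`, iff `det(a×b) = 0`. -/
theorem stmt6 {F : Type*} [Field F] (h2 : (2 : F) ≠ 0)
    (a b : Matrix (Fin 2) (Fin 2) F) (ha : a.trace = 0) (hb : b.trace = 0) :
    (¬ LinearIndependent F ![a, b, matCross a b] ↔
        a.det * b.det = (matInner a b) ^ 2) ∧
      (a.det * b.det = (matInner a b) ^ 2 ↔ (matCross a b).det = 0) := by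
  have ha' : a 1 1 = -(a 0 0) := by
    rw [Matrix.trace_fin_two] at ha; linear_combination ha
  have hb' : b 1 1 = -(b 0 0) := by
    rw [Matrix.trace_fin_two] at hb; linear_combination hb
  set c := matCross a b with hcdef
  have hcent : ∀ i j, c i j = (2 : F)⁻¹ * ((a * b) i j - (b * a) i j) := by
    intro i j
    simp [hcdef, matCross]
  have h00 := hcent 0 0
  have h01 := hcent 0 1
  have h10 := hcent 1 0
  have h11 := hcent 1 1
  rw [Matrix.mul_apply, Matrix.mul_apply, Fin.sum_univ_two, Fin.sum_univ_two] at h00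
  rw [Matrix.mul_apply, Matrix.mul_apply, Fin.sum_univ_two, Fin.sum_univ_two] at h01
  rw [Matrix.mul_apply, Matrix.mul_apply, Fin.sum_univ_two, Fin.sum_univ_two] at h10
  rw [Matrix.mul_apply, Matrix.mul_apply, Fin.sum_univ_two, Fin.sum_univ_two] at h11
  have hc' : c 1 1 = -(c 0 0) := by rw [h00, h11]; ring
  -- the key determinant identity: det(a×b) = det a · det b − (a·b)²
  have key : c.det = a.det * b.det - (matInner a b) ^ 2 := by
    rw [Matrix.det_fin_two, Matrix.det_fin_two, Matrix.det_fin_two, matInner,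
      Matrix.trace_fin_two, Matrix.mul_apply, Matrix.mul_apply, Fin.sum_univ_two,
      Fin.sum_univ_two, h00, h01, h10, h11, ha', hb']
    field_simp
    ring
  constructor
  · -- dependence iff the scalar condition
    set M : Matrix (Fin 3) (Fin 3) F :=
      !![a 0 0, b 0 0, c 0 0; a 0 1, b 0 1, c 0 1; a 1 0, b 1 0, c 1 0] with hM
    have hMdet : M.det = -2 * (a.det * b.det - (matInner a b) ^ 2) := by
      rw [hM, Matrix.det_fin_three]
      simp only [Matrix.cons_val', Matrix.cons_val_zero, Matrix.cons_val_one, Matrix.head_cons,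
        Matrix.empty_val', Matrix.cons_val_fin_one, Matrix.head_fin_const, Matrix.cons_val_two,
        Matrix.tail_cons, Matrix.of_apply]
      rw [Matrix.det_fin_two, Matrix.det_fin_two, matInner, Matrix.trace_fin_two,
        Matrix.mul_apply, Matrix.mul_apply, Fin.sum_univ_two, Fin.sum_univ_two,
        h00, h01, h10, ha', hb']
      field_simp
      ring
    have step1 : (¬ LinearIndependent F ![a, b, c]) ↔ ∃ g ≠ (0 : Fin 3 → F), M *ᵥ g = 0 := by
      rw [Fintype.not_linearIndependent_iff]
      have combo : ∀ g : Fin 3 → F,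
          (∑ i, g i • ![a, b, c] i = 0) ↔ M *ᵥ g = 0 := by
        intro g
        rw [Fin.sum_univ_three]
        simp only [Matrix.cons_val_zero, Matrix.cons_val_one, Matrix.head_cons,
          Matrix.cons_val_two, Matrix.tail_cons]
        constructor
        · intro h
          have he : ∀ i j : Fin 2, g 0 * a i j + g 1 * b i j + g 2 * c i j = 0 := by
            intro i j
            have h' := congrFun (congrFun h i) j
            simpa [Matrix.add_apply, Matrix.smul_apply, smul_eq_mul] using h'
          funext i
          rw [Matrix.mulVec, dotProduct, Fin.sum_univ_three]
          fin_cases i <;>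
            simp [hM, Matrix.vecHead, Matrix.vecTail] <;>
            [linear_combination he 0 0; linear_combination he 0 1; linear_combination he 1 0]
        · intro h
          have he : ∀ i : Fin 3, M i 0 * g 0 + M i 1 * g 1 + M i 2 * g 2 = 0 := by
            intro i
            have h' := congrFun h i
            simpa [Matrix.mulVec, dotProduct, Fin.sum_univ_three] using h'
          have e0 := he 0
          have e1 := he 1
          have e2 := he 2
          simp only [hM, Matrix.cons_val', Matrix.cons_val_zero, Matrix.cons_val_one,
            Matrix.head_cons, Matrix.empty_val', Matrix.cons_val_fin_one, Matrix.head_fin_const,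
            Matrix.cons_val_two, Matrix.tail_cons, Matrix.of_apply] at e0 e1 e2
          funext i j
          fin_cases i <;> fin_cases j <;>
            simp only [Matrix.add_apply, Matrix.smul_apply, smul_eq_mul, Matrix.zero_apply,
              Fin.mk_zero, Fin.mk_one, Fin.isValue]
          · linear_combination e0
          · linear_combination e1
          · linear_combination e2
          · linear_combination -e0 + g 0 * ha' + g 1 * hb' + g 2 * hc'
      constructor
      · rintro ⟨g, hsum, i, hi⟩
        exact ⟨g, fun h0 => hi (by rw [h0]; rfl), (combo g).1 hsum⟩
      · rintro ⟨g, hg, hmul⟩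
        refine ⟨g, (combo g).2 hmul, ?_⟩
        by_contra hno
        push_neg at hno
        exact hg (funext hno)
    rw [step1, Matrix.exists_mulVec_eq_zero_iff, hMdet]
    constructor
    · intro h
      rcases mul_eq_zero.mp h with h' | h'
      · exact absurd (by linear_combination -h' : (2 : F) = 0) h2
      · linear_combination h'
    · intro h
      rw [h]; ring
  · rw [key]
    constructor
    · intro h; linear_combination h
    · intro h; linear_combination h
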